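/- arXiv:2604.19698 — 2 statements merged into one kernel-verified Lean document; each statement's English description precedes it below -/
import Mathlib

section
/- Let f ∈ L²(μ) and let φ_0,…,φ_{N-1} ∈ L²(μ) be orthonormal w.r.t. μ. For points x_1,…,x_N, let Φ_{φ_0,f}(x_{1:N}) denote the matrix Φ(x_{1:N}) with its first column replaced by (f(x_1),…,f(x_N))ᵀ. Then (1/N!) ∫_{X^N} det Φ_{φ_0,f}(x_{1:N}) · det Φ(x_{1:N}) dμ^{⊗N}(x) = ⟨f, φ_0⟩. -/
/-!
Expanding both determinants over permutations and integrating term by term, Fubini turns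
`∫ det [g_k(x_n)] · det [ψ_k(x_n)] dμ^⊗N` into `N!` times the Gram determinant
`det [⟨g_k, ψ_l⟩]` (Andreief's identity). With `g = φ` except `g_0 = f`, orthonormality makes every
row of the Gram matrix but the first a row of the identity, so its determinant is `⟨f, φ_0⟩`.
Since `μ` need not be σ-finite, the integral is first moved to `μ` restricted to a set off which
every `φ_k` vanishes and on which `μ` is σ-finite; such a set exists because the `φ_k` are in `L²`.
-/

open MeasureTheory Matrix Equiv Set

namespace Matrix

theorem updateCol_of_eq_of_update {ι R X : Type*} [DecidableEq ι] (φ : ι → X → R) (x : ι → X)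
    (j : ι) (f : X → R) :
    updateCol (of fun n k => φ k (x n)) j (fun n => f (x n))
      = of fun n k => Function.update φ j f k (x n) := by
  ext n k
  rcases eq_or_ne k j with rfl | hk <;> simp [*]

variable {ι R : Type*} [Fintype ι] [DecidableEq ι] [CommRing R]

theorem det_eq_sum_sign_mul_prod_apply (M : Matrix ι ι R) :
    M.det = ∑ σ : Perm ι, (Perm.sign σ : R) * ∏ i, M i (σ i) := by
  rw [← det_transpose, det_apply']
  rfl

theorem sum_sign_mul_sign_mul_prod_apply (M : Matrix ι ι R) :
    ∑ σ : Perm ι, ∑ τ : Perm ι, (Perm.sign σ : R) * Perm.sign τ * ∏ i, M (σ i) (τ i)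
      = (Fintype.card ι).factorial * M.det := by
  have row_sum : ∀ σ : Perm ι,
      ∑ τ : Perm ι, (Perm.sign σ : R) * Perm.sign τ * ∏ i, M (σ i) (τ i) = M.det := by
    intro σ
    have h := det_eq_sum_sign_mul_prod_apply (M.submatrix σ id)
    simp only [submatrix_apply, id] at h
    simp_rw [mul_assoc, ← Finset.mul_sum]
    rw [← h, det_permute, ← mul_assoc, ← Int.cast_mul, ← Units.val_mul, Int.units_mul_self,
      Units.val_one, Int.cast_one, one_mul]
  simp [row_sum, Fintype.card_perm]

theorem det_of_mul_det_of_eq_sum_prod {X : Type*} (g ψ : ι → X → R) (x : ι → X) :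
    det (of fun n k => g k (x n)) * det (of fun n k => ψ k (x n))
      = ∑ σ : Perm ι, ∑ τ : Perm ι, (Perm.sign σ : R) * Perm.sign τ *
          ∏ n, g (σ n) (x n) * ψ (τ n) (x n) := by
  simp_rw [det_eq_sum_sign_mul_prod_apply, Finset.sum_mul_sum, Finset.prod_mul_distrib, of_apply]
  congr! 2
  ring

theorem det_updateRow_one (i : ι) (v : ι → R) : (updateRow (1 : Matrix ι ι R) i v).det = v i := by
  have hv : v = ∑ k, v k • (1 : Matrix ι ι R) k := by
    ext j
    simp [one_apply]
  rw [hv, det_updateRow_sum, det_one, smul_eq_mul, mul_one]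
  simp [one_apply]

end Matrix

namespace MeasureTheory

section Pi

variable {ι : Type*} [Fintype ι] {α : ι → Type*}

theorem OuterMeasure.pi_mono {m m' : ∀ i, OuterMeasure (α i)} (h : ∀ i, m i ≤ m' i) :
    OuterMeasure.pi m ≤ OuterMeasure.pi m' :=
  le_pi.2 fun s _ => (pi_pi_le m s).trans (Finset.prod_le_prod' fun i _ => h i (s i))

theorem OuterMeasure.restrict_univ_pi_pi_le (m : ∀ i, OuterMeasure (α i)) (S : ∀ i, Set (α i)) :
    restrict (univ.pi S) (OuterMeasure.pi m) ≤ OuterMeasure.pi fun i => restrict (S i) (m i) := by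
  refine le_pi.2 fun s _ => ?_
  simpa only [restrict_apply, ← pi_inter_distrib] using pi_pi_le m fun i => s i ∩ S i

variable [∀ i, MeasurableSpace (α i)]

/-- A version of `Measure.restrict_pi_pi` for measures that are not σ-finite. -/
theorem Measure.restrict_univ_pi_pi_restrict (μ : ∀ i, Measure (α i)) {S : ∀ i, Set (α i)}
    (hS : ∀ i, MeasurableSet (S i)) :
    (Measure.pi μ).restrict (univ.pi S)
      = (Measure.pi fun i => (μ i).restrict (S i)).restrict (univ.pi S) := by
  ext A hA
  have hAS : MeasurableSet (A ∩ univ.pi S) := hA.inter (.univ_pi hS)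
  simp_rw [Measure.restrict_apply hA, Measure.pi_def, toMeasure_apply _ _ hAS,
    Measure.restrict_toOuterMeasure_eq_toOuterMeasure_restrict (hS _)]
  refine le_antisymm ?_ (OuterMeasure.pi_mono (fun i t => ?_) _)
  · calc OuterMeasure.pi (fun i => (μ i).toOuterMeasure) (A ∩ univ.pi S)
        = OuterMeasure.restrict (univ.pi S) (OuterMeasure.pi fun i => (μ i).toOuterMeasure)
            (A ∩ univ.pi S) := by rw [OuterMeasure.restrict_apply, inter_assoc, inter_self]
      _ ≤ _ := OuterMeasure.restrict_univ_pi_pi_le _ S _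
  · rw [OuterMeasure.restrict_apply]
    exact measure_mono inter_subset_left

theorem integral_pi_eq_integral_pi_restrict {E : Type*} [NormedAddCommGroup E] [NormedSpace ℝ E]
    (μ : ∀ i, Measure (α i)) {S : ∀ i, Set (α i)} (hS : ∀ i, MeasurableSet (S i))
    {F : (∀ i, α i) → E} (hF : ∀ x ∉ univ.pi S, F x = 0) :
    ∫ x, F x ∂Measure.pi μ = ∫ x, F x ∂Measure.pi fun i => (μ i).restrict (S i) := by
  rw [← setIntegral_eq_integral_of_forall_compl_eq_zero (μ := Measure.pi μ) hF,
    Measure.restrict_univ_pi_pi_restrict μ hS, setIntegral_eq_integral_of_forall_compl_eq_zero hF]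

end Pi

section SigmaFiniteSupport

variable {α E : Type*} [MeasurableSpace α] {μ : Measure α} [NormedAddCommGroup E]
  {p : ENNReal}

theorem MemLp.exists_sigmaFinite_restrict_eq_zero_compl {f : α → E} (hf : MemLp f p μ)
    (hp0 : p ≠ 0) (hptop : p ≠ ⊤) :
    ∃ S, MeasurableSet S ∧ SigmaFinite (μ.restrict S) ∧ ∀ x ∉ S, f x = 0 := by
  obtain ⟨t, ht, hft, _⟩ := (hf.aefinStronglyMeasurable hp0 hptop).exists_set_sigmaFinite
  rw [Filter.EventuallyEq, ae_restrict_iff' ht.compl] at hft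
  -- `f` may be nonzero on a null set off `t`; absorb a measurable null hull of it.
  set Z := toMeasurable μ {x | ¬(x ∈ tᶜ → f x = 0)}
  have hZ : μ Z = 0 := by rw [measure_toMeasurable]; exact ae_iff.1 hft
  have : SigmaFinite (μ.restrict Z) := by rw [Measure.restrict_eq_zero.2 hZ]; infer_instance
  refine ⟨t ∪ Z, ht.union (measurableSet_toMeasurable _ _), inferInstance, fun x hx => ?_⟩
  rw [mem_union, not_or] at hx
  by_contra hfx
  exact hx.2 (subset_toMeasurable μ _ fun h => hfx (h hx.1))

theorem MemLp.exists_sigmaFinite_restrict_forall_eq_zero_compl {ι : Type*} [Finite ι]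
    {f : ι → α → E} (hf : ∀ i, MemLp (f i) p μ) (hp0 : p ≠ 0) (hptop : p ≠ ⊤) :
    ∃ S, MeasurableSet S ∧ SigmaFinite (μ.restrict S) ∧ ∀ i, ∀ x ∉ S, f i x = 0 := by
  choose S hS _ hfS using fun i => (hf i).exists_sigmaFinite_restrict_eq_zero_compl hp0 hptop
  refine ⟨⋃ i, S i, .iUnion hS, Measure.sigmaFinite_of_le _ Measure.restrict_iUnion_le,
    fun i x hx => ?_⟩
  exact hfS i x fun h => hx (mem_iUnion_of_mem i h)

end SigmaFiniteSupport

section Andreief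

variable {ι X 𝕜 : Type*} [Fintype ι] [DecidableEq ι] [MeasurableSpace X] [RCLike 𝕜]

theorem integral_det_of_mul_det_of (μ : Measure X) [SigmaFinite μ] (g ψ : ι → X → 𝕜)
    (hint : ∀ k l, Integrable (fun t => g k t * ψ l t) μ) :
    ∫ x : ι → X, det (of fun n k => g k (x n)) * det (of fun n k => ψ k (x n))
        ∂(Measure.pi fun _ => μ)
      = ((Fintype.card ι).factorial : 𝕜) * det (of fun k l => ∫ t, g k t * ψ l t ∂μ) := by
  have hint_prod : ∀ σ τ : Perm ι, Integrable
      (fun x : ι → X => ∏ n, g (σ n) (x n) * ψ (τ n) (x n)) (Measure.pi fun _ => μ) :=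
    fun σ τ => Integrable.fintype_prod (f := fun n t => g (σ n) t * ψ (τ n) t) fun _ => hint _ _
  simp_rw [det_of_mul_det_of_eq_sum_prod]
  rw [integral_finsetSum _ fun σ _ => integrable_finsetSum _ fun τ _ => (hint_prod σ τ).const_mul _]
  simp_rw [integral_finsetSum _ fun τ _ => (hint_prod _ τ).const_mul _, integral_const_mul]
  rw [← sum_sign_mul_sign_mul_prod_apply]
  refine Finset.sum_congr rfl fun σ _ => Finset.sum_congr rfl fun τ _ => ?_
  rw [integral_fintype_prod_eq_prod (fun n t => g (σ n) t * ψ (τ n) t)]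
  rfl

end Andreief

end MeasureTheory

/-- Unbiasedness of the first EZ coordinate: the cross integral of the column-replaced
determinant with the feature determinant equals `⟨f, φ₀⟩`. -/
theorem ez_first_moment
    {X : Type*} [MeasurableSpace X] (μ : Measure X) (N : ℕ) (hN : 0 < N)
    (φ : Fin N → X → ℝ) (f : X → ℝ)
    (hf : MemLp f 2 μ) (hφ : ∀ k, MemLp (φ k) 2 μ)
    (horth : ∀ k l, ∫ x, φ k x * φ l x ∂μ = if k = l then (1 : ℝ) else 0) :
    (Nat.factorial N : ℝ)⁻¹ *
      ∫ x : Fin N → X,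
        Matrix.det (Matrix.updateCol (Matrix.of fun n k : Fin N => φ k (x n))
            ⟨0, hN⟩ (fun n => f (x n))) *
        Matrix.det (Matrix.of fun n k : Fin N => φ k (x n))
        ∂(Measure.pi fun _ => μ)
      = ∫ t, f t * φ ⟨0, hN⟩ t ∂μ := by
  set g := Function.update φ ⟨0, hN⟩ f
  have hg : ∀ k, MemLp (g k) 2 μ := fun k => by
    rcases eq_or_ne k ⟨0, hN⟩ with rfl | hk <;> simp [g, *]
  obtain ⟨S, hS, _, hSφ⟩ :=
    MemLp.exists_sigmaFinite_restrict_forall_eq_zero_compl hφ two_ne_zero ENNReal.ofNat_ne_top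
  have hvanish : ∀ x ∉ univ.pi fun _ : Fin N => S,
      det (of fun n k => g k (x n)) * det (of fun n k => φ k (x n)) = 0 := by
    intro x hx
    obtain ⟨n, -, hn⟩ := not_forall₂.1 hx
    exact mul_eq_zero_of_right _ (det_eq_zero_of_row_eq_zero n fun k => hSφ k _ hn)
  have hgram : of (fun k l => ∫ t, g k t * φ l t ∂μ.restrict S)
      = updateRow 1 ⟨0, hN⟩ fun l => ∫ t, f t * φ l t ∂μ := by
    ext k l
    rw [of_apply, setIntegral_eq_integral_of_forall_compl_eq_zero fun t ht => by
      rw [hSφ l t ht, mul_zero]]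
    rcases eq_or_ne k ⟨0, hN⟩ with rfl | hk
    · simp [g]
    · simp [g, hk, horth, one_apply]
  simp_rw [updateCol_of_eq_of_update]
  rw [integral_pi_eq_integral_pi_restrict _ (fun _ => hS) hvanish,
    integral_det_of_mul_det_of _ g φ fun k l => ((hg k).restrict S).integrable_mul
      ((hφ l).restrict S),
    hgram, det_updateRow_one, Fintype.card_fin,
    inv_mul_cancel_left₀ (Nat.cast_ne_zero.2 N.factorial_ne_zero)]
end

section
/- Let f ∈ L²(μ) and let φ_0,…,φ_{N-1} ∈ L²(μ) be orthonormal w.r.t. μ. Then (1/N!) ∫_{X^N} (det Φ_{φ_0,f}(x_{1:N}))² dμ^{⊗N}(x) = ‖f‖² − Σ_{k=1}^{N-1} ⟨f, φ_k⟩². -/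
/-!
Expanding both determinants by the Leibniz formula and integrating term by term, each term
factors over the coordinates, and the signed sum over pairs of permutations collapses to
`N! · det G`, where `G` is the Gram matrix of `f, φ_1, …, φ_{N-1}` (Andréief's identity).
By orthonormality `G` is the identity away from its first row and column, so its Schur
complement gives `‖f‖² - ∑ ⟨f, φ_k⟩²`.

Fubini needs σ-finiteness, which `μ` need not have; but finitely many `L²` functions vanish
a.e. off a set `T` on which `μ` is σ-finite, the integrand vanishes a.e. off `Tᴺ`, and `μ^⊗N`
restricted to `Tᴺ` is `(μ|_T)^⊗N`.
-/

open MeasureTheory Matrix BigOperators Set Filter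

namespace Matrix

variable {ι R : Type*} [Fintype ι] [DecidableEq ι] [CommRing R]

theorem det_eq_sub_sum_of_eq_one_of_ne {i₀ : ι} (G : Matrix ι ι R)
    (hG : ∀ k l, k ≠ i₀ → l ≠ i₀ → G k l = (1 : Matrix ι ι R) k l) :
    G.det = G i₀ i₀ - ∑ k ∈ Finset.univ.filter (fun k => k ≠ i₀), G i₀ k * G k i₀ := by
  set e := Equiv.sumCompl (· = i₀)
  have h₂₂ : (G.submatrix e e).toBlocks₂₂ = 1 := by
    ext k l
    simpa [e, toBlocks₂₂, one_apply, Subtype.ext_iff] using hG k l k.2 l.2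
  rw [← det_submatrix_equiv_self e, ← fromBlocks_toBlocks (G.submatrix e e), h₂₂,
    det_fromBlocks_one₂₂, det_unique]
  simp only [e, toBlocks₁₁, toBlocks₁₂, toBlocks₂₁, sub_apply, mul_apply, of_apply,
    submatrix_apply, Equiv.sumCompl_apply_inl, Equiv.sumCompl_apply_inr]
  rw [Finset.sum_subtype (p := fun k => ¬k = i₀) _ (fun k => by simp)]
  rfl

theorem sum_perm_sign_mul_sign_mul_prod (G : Matrix ι ι R) :
    ∑ σ : Equiv.Perm ι, ∑ τ : Equiv.Perm ι,
        ((Equiv.Perm.sign σ : ℤ) : R) * (Equiv.Perm.sign τ : ℤ) * ∏ n, G (σ n) (τ n)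
      = (Fintype.card ι).factorial * G.det := by
  have hτ : ∀ τ : Equiv.Perm ι,
      ∑ σ : Equiv.Perm ι,
          ((Equiv.Perm.sign σ : ℤ) : R) * (Equiv.Perm.sign τ : ℤ) * ∏ n, G (σ n) (τ n)
        = G.det := by
    intro τ
    have := det_permute' τ G
    rw [det_apply'] at this
    simp only [submatrix_apply, id] at this
    simp_rw [mul_right_comm _ ((Equiv.Perm.sign τ : ℤ) : R), ← Finset.sum_mul, this]
    rw [mul_right_comm, ← Int.cast_mul, ← Units.val_mul, Int.units_mul_self, Units.val_one,
      Int.cast_one, one_mul]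
  rw [Finset.sum_comm]
  simp only [hτ, Finset.sum_const, Finset.card_univ, Fintype.card_perm, nsmul_eq_mul]

theorem det_mul_det_eq_sum_perm_perm (A B : Matrix ι ι R) :
    A.det * B.det = ∑ σ : Equiv.Perm ι, ∑ τ : Equiv.Perm ι,
        ((Equiv.Perm.sign σ : ℤ) : R) * (Equiv.Perm.sign τ : ℤ) * ∏ n, A n (σ n) * B n (τ n) := by
  rw [← det_transpose A, ← det_transpose B, det_apply', det_apply', Finset.sum_mul_sum]
  simp only [transpose_apply, Finset.prod_mul_distrib]
  exact Finset.sum_congr rfl fun σ _ => Finset.sum_congr rfl fun τ _ => by ring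

end Matrix

namespace MeasureTheory.Measure

variable {ι : Type*} [Fintype ι] {α : ι → Type*} [∀ i, MeasurableSpace (α i)]

theorem pi_univ_pi_le (μ : ∀ i, Measure (α i)) {s : ∀ i, Set (α i)}
    (hs : ∀ i, MeasurableSet (s i)) : Measure.pi μ (univ.pi s) ≤ ∏ i, μ i (s i) := by
  rw [Measure.pi_def, toMeasure_apply _ _ (.univ_pi hs)]
  exact OuterMeasure.pi_pi_le _ s

theorem pi_eval_preimage_null' (μ : ∀ i, Measure (α i)) {i : ι} {s : Set (α i)}
    (hs : μ i s = 0) : Measure.pi μ (Function.eval i ⁻¹' s) = 0 := by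
  classical
  obtain ⟨t, hst, ht, ht0⟩ := exists_measurable_superset_of_null hs
  refine measure_mono_null (preimage_mono hst) (nonpos_iff_eq_zero.1 ?_)
  rw [← univ_pi_update_univ]
  refine (pi_univ_pi_le μ fun j => ?_).trans_eq (Finset.prod_eq_zero (Finset.mem_univ i) ?_)
  · rcases eq_or_ne j i with rfl | hj
    · simpa using ht
    · simp [Function.update_of_ne hj]
  · simpa using ht0

theorem tendsto_eval_ae_ae' {μ : ∀ i, Measure (α i)} {i : ι} :
    Tendsto (Function.eval i) (ae (Measure.pi μ)) (ae (μ i)) :=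
  fun _ hs => pi_eval_preimage_null' μ hs

theorem pi_mono {μ ν : ∀ i, Measure (α i)} (h : ∀ i, μ i ≤ ν i) :
    Measure.pi μ ≤ Measure.pi ν := by
  have hle : OuterMeasure.pi (fun i => (μ i).toOuterMeasure)
      ≤ OuterMeasure.pi fun i => (ν i).toOuterMeasure :=
    OuterMeasure.le_pi.2 fun s _ => (OuterMeasure.pi_pi_le _ s).trans
      (Finset.prod_le_prod' fun i _ => Measure.le_iff'.1 (h i) (s i))
  refine Measure.le_iff.2 fun A hA => ?_
  rw [Measure.pi_def, Measure.pi_def, toMeasure_apply _ _ hA, toMeasure_apply _ _ hA]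
  exact hle A

theorem restrict_pi_pi' (μ : ∀ i, Measure (α i)) {T : ∀ i, Set (α i)}
    (hT : ∀ i, MeasurableSet (T i)) [∀ i, SigmaFinite ((μ i).restrict (T i))] :
    (Measure.pi μ).restrict (univ.pi T) = Measure.pi fun i => (μ i).restrict (T i) := by
  refine (Measure.pi_eq fun s hs => ?_).symm
  rw [Measure.restrict_apply (.univ_pi hs), ← pi_inter_distrib]
  refine le_antisymm ?_ ?_
  · refine (pi_univ_pi_le μ fun i => (hs i).inter (hT i)).trans_eq ?_
    exact Finset.prod_congr rfl fun i _ => (Measure.restrict_apply (hs i)).symm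
  · calc ∏ i, (μ i).restrict (T i) (s i)
        = Measure.pi (fun i => (μ i).restrict (T i)) (univ.pi fun i => s i ∩ T i) := by
          rw [Measure.pi_pi]
          refine Finset.prod_congr rfl fun i _ => ?_
          rw [Measure.restrict_apply (hs i), Measure.restrict_apply ((hs i).inter (hT i)),
            inter_assoc, inter_self]
      _ ≤ Measure.pi μ (univ.pi fun i => s i ∩ T i) :=
          pi_mono (fun i => Measure.restrict_le_self) _

end MeasureTheory.Measure

namespace MeasureTheory

variable {X : Type*} [MeasurableSpace X] {μ : Measure X}

theorem exists_sigmaFinite_restrict_ae_eq_zero_off {κ E : Type*} [Finite κ] [Zero E]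
    [TopologicalSpace E] [T2Space E] {f : κ → X → E} (hf : ∀ k, AEFinStronglyMeasurable (f k) μ) :
    ∃ T, MeasurableSet T ∧ SigmaFinite (μ.restrict T) ∧ ∀ᵐ x ∂μ, x ∉ T → ∀ k, f k x = 0 := by
  refine ⟨⋃ k, (hf k).sigmaFiniteSet, .iUnion fun k => (hf k).measurableSet,
    Measure.sigmaFinite_of_le _ Measure.restrict_iUnion_le, ?_⟩
  have h : ∀ k, ∀ᵐ x ∂μ, x ∉ (hf k).sigmaFiniteSet → f k x = 0 := fun k =>
    (ae_restrict_iff' (hf k).measurableSet.compl).1 (hf k).ae_eq_zero_compl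
  filter_upwards [ae_all_iff.2 h] with x hx hxT k
  exact hx k fun hk => hxT (mem_iUnion_of_mem k hk)

variable {𝕜 : Type*} [RCLike 𝕜] {ι : Type*} [Fintype ι] [DecidableEq ι]

theorem integral_det_mul_det_pi_of_sigmaFinite [SigmaFinite μ] {ψ χ : ι → X → 𝕜}
    (hψ : ∀ k, MemLp (ψ k) 2 μ) (hχ : ∀ k, MemLp (χ k) 2 μ) :
    ∫ x : ι → X, (of fun n k => ψ k (x n)).det * (of fun n k => χ k (x n)).det
        ∂(Measure.pi fun _ => μ)
      = ((Fintype.card ι).factorial : 𝕜) * (of fun k l => ∫ t, ψ k t * χ l t ∂μ).det := by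
  have hint : ∀ σ τ : Equiv.Perm ι,
      Integrable (fun x : ι → X => ∏ n, ψ (σ n) (x n) * χ (τ n) (x n)) (Measure.pi fun _ => μ) :=
    fun σ τ => Integrable.fintype_prod (f := fun n t => ψ (σ n) t * χ (τ n) t)
      fun n => (hψ (σ n)).integrable_mul (hχ (τ n))
  simp_rw [det_mul_det_eq_sum_perm_perm, of_apply]
  rw [integral_finsetSum _ fun σ _ => integrable_finsetSum _ fun τ _ => (hint σ τ).const_mul _]
  have hprod : ∀ σ τ : Equiv.Perm ι,
      ∫ x : ι → X, ∏ n, ψ (σ n) (x n) * χ (τ n) (x n) ∂(Measure.pi fun _ => μ)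
        = ∏ n, ∫ t, ψ (σ n) t * χ (τ n) t ∂μ :=
    fun σ τ => integral_fintype_prod_eq_prod fun n t => ψ (σ n) t * χ (τ n) t
  simp_rw [integral_finsetSum _ fun τ _ => (hint _ τ).const_mul _, integral_const_mul, hprod]
  rw [← sum_perm_sign_mul_sign_mul_prod]
  rfl

theorem integral_det_mul_det_pi {ψ χ : ι → X → 𝕜}
    (hψ : ∀ k, MemLp (ψ k) 2 μ) (hχ : ∀ k, MemLp (χ k) 2 μ) :
    ∫ x : ι → X, (of fun n k => ψ k (x n)).det * (of fun n k => χ k (x n)).det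
        ∂(Measure.pi fun _ => μ)
      = ((Fintype.card ι).factorial : 𝕜) * (of fun k l => ∫ t, ψ k t * χ l t ∂μ).det := by
  obtain ⟨T, hT, hTσ, hzero⟩ :=
    exists_sigmaFinite_restrict_ae_eq_zero_off (μ := μ) (f := Sum.elim ψ χ) fun
      | .inl k => (hψ k).aefinStronglyMeasurable two_ne_zero ENNReal.ofNat_ne_top
      | .inr k => (hχ k).aefinStronglyMeasurable two_ne_zero ENNReal.ofNat_ne_top
  have hrows : ∀ᵐ x ∂(Measure.pi fun _ => μ), x ∉ univ.pi (fun _ => T) →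
      (of fun n k => ψ k (x n)).det * (of fun n k => χ k (x n)).det = 0 := by
    filter_upwards [ae_all_iff.2 fun n : ι =>
      (Measure.tendsto_eval_ae_ae' (μ := fun _ => μ) (i := n)).eventually hzero] with x hx hxT
    obtain ⟨n, hn⟩ : ∃ n, x n ∉ T := by simpa [Set.mem_pi] using hxT
    rw [det_eq_zero_of_row_eq_zero n fun k => hx n hn (.inl k), zero_mul]
  have hgram : ∀ k l, ∫ t in T, ψ k t * χ l t ∂μ = ∫ t, ψ k t * χ l t ∂μ := fun k l =>
    setIntegral_eq_integral_of_ae_compl_eq_zero <| hzero.mono fun t ht htT => by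
      rw [show ψ k t = 0 from ht htT (.inl k), zero_mul]
  calc _ = ∫ x in univ.pi fun _ => T, (of fun n k => ψ k (x n)).det
          * (of fun n k => χ k (x n)).det ∂(Measure.pi fun _ => μ) :=
        (setIntegral_eq_integral_of_ae_compl_eq_zero hrows).symm
    _ = _ := by
        rw [Measure.restrict_pi_pi' _ fun _ => hT,
          integral_det_mul_det_pi_of_sigmaFinite (fun k => (hψ k).restrict T)
            fun k => (hχ k).restrict T]
        simp_rw [hgram]

end MeasureTheory

/-- Second moment of the first EZ coordinate. -/
theorem ez_second_moment
    {X : Type*} [MeasurableSpace X] (μ : Measure X) (N : ℕ) (hN : 0 < N)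
    (φ : Fin N → X → ℝ) (f : X → ℝ)
    (hf : MemLp f 2 μ) (hφ : ∀ k, MemLp (φ k) 2 μ)
    (horth : ∀ k l, ∫ x, φ k x * φ l x ∂μ = if k = l then (1 : ℝ) else 0) :
    (Nat.factorial N : ℝ)⁻¹ *
      ∫ x : Fin N → X,
        (Matrix.det ((Matrix.of fun n k : Fin N => φ k (x n)).updateCol
            ⟨0, hN⟩ (fun n => f (x n)))) ^ 2
        ∂(Measure.pi fun _ => μ)
      = (∫ t, f t ^ 2 ∂μ)
        - ∑ k ∈ Finset.univ.filter (fun k : Fin N => k ≠ ⟨0, hN⟩),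
            (∫ t, f t * φ k t ∂μ) ^ 2 := by
  set i₀ : Fin N := ⟨0, hN⟩
  set ψ := Function.update φ i₀ f
  have hψ : ∀ k, MemLp (ψ k) 2 μ := fun k => by
    rcases eq_or_ne k i₀ with rfl | hk
    · simpa [ψ] using hf
    · simpa [ψ, hk] using hφ k
  have hcol : ∀ x : Fin N → X, (of fun n k => φ k (x n)).updateCol i₀ (fun n => f (x n))
      = of fun n k => ψ k (x n) := fun x => by
    ext n k
    rcases eq_or_ne k i₀ with rfl | hk <;> simp [ψ, *]
  simp_rw [hcol, sq, integral_det_mul_det_pi hψ hψ, Fintype.card_fin]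
  rw [inv_mul_cancel_left₀ (by positivity), det_eq_sub_sum_of_eq_one_of_ne (i₀ := i₀)]
  · simp only [of_apply, ψ, Function.update_self]
    refine congrArg _ (Finset.sum_congr rfl fun k hk => ?_)
    simp_rw [Function.update_of_ne (Finset.mem_filter.1 hk).2, mul_comm (φ k _)]
  · intro k l hk hl
    simpa [ψ, hk, hl, one_apply] using horth k l
end
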